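/- Let G be a k-regular connected vertex-transitive finite simple graph that is neither a complete graph nor a cycle. Then every minimum edge cut of G isolates a single vertex if and only if G contains no clique of size k. -/

import Mathlib

open SimpleGraph

variable {V : Type*}

/-- `G` has a perfect matching. -/
def HasPerfectMatching (G : SimpleGraph V) : Prop :=
  ∃ M : G.Subgraph, M.IsPerfectMatching

/-- `F` is a matching preclusion set of `G`. -/
def IsMPSet (G : SimpleGraph V) (F : Finset (Sym2 V)) : Prop :=
  ↑F ⊆ G.edgeSet ∧ ¬ HasPerfectMatching (G.deleteEdges ↑F)

/-- The matching preclusion number of `G`. -/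
noncomputable def mpNumber (G : SimpleGraph V) : ℕ :=
  sInf {n | ∃ F : Finset (Sym2 V), IsMPSet G F ∧ F.card = n}

/-- `G` is `k`-regular. -/
def GIsRegular (G : SimpleGraph V) (k : ℕ) : Prop :=
  ∀ v : V, (G.neighborSet v).ncard = k

/-- `G` is vertex-transitive. -/
def VertexTransitive (G : SimpleGraph V) : Prop :=
  ∀ x y : V, ∃ φ : G ≃g G, φ x = y

/-- The minimum degree of `G`. -/
noncomputable def minDeg (G : SimpleGraph V) : ℕ :=
  sInf {d | ∃ v : V, (G.neighborSet v).ncard = d}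

/-- `F` is an edge cut of `G`: the set of all edges between `X` and its complement,
for some `X` with both `X` and `Xᶜ` nonempty. -/
def IsEdgeCut (G : SimpleGraph V) (F : Set (Sym2 V)) : Prop :=
  ∃ X : Set V, X.Nonempty ∧ Xᶜ.Nonempty ∧
    F = {e | ∃ a ∈ X, ∃ b ∈ Xᶜ, G.Adj a b ∧ e = s(a, b)}

/-- The edge-connectivity of `G`. -/
noncomputable def edgeConnectivity (G : SimpleGraph V) : ℕ :=
  sInf {n | ∃ F : Finset (Sym2 V), ↑F ⊆ G.edgeSet ∧ F.card = n ∧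
    ¬ (G.deleteEdges ↑F).Connected}

/-!
Write `d(X)` for the number of edges leaving `X` and `λ` for the edge-connectivity. The
function `d` is submodular and posimodular, so if two minimum cut sides `X ≠ Y` of the same
size `≤ |V| / 2` meet, then `X ∩ Y` and `X \ Y` are minimum cut sides as well. Take a
minimum cut side `B` of least size among those whose two sides both have at least `m`
vertices. If an automorphism `φ` moves `B` to a set meeting it, then `B ∩ φ B` and `B \ φ B`
are smaller such sides, so by minimality both have fewer than `m` vertices; hence unless
`|B| ≤ 2m - 2` the set `B` is a block: `φ B = B` or `φ B ∩ B = ∅`. By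
vertex-transitivity every vertex of a block has the same number `t` of neighbours outside it,
hence `d(B) = |B| t`, while `k + 1 ≤ t + |B|`.

For `m = 1` this gives `λ = |B| t ≥ k` (Mader). For `m = 2` and `k ≥ 3` a two-vertex side
has `d ≥ 2k - 2 > k`, so `|B| ≥ 3`, and `|B| t = k` forces `t = 1`, `|B| = k`: `B` is a
`k`-clique. Conversely a `k`-clique `S` has `d(S) = k`, and a cut determines its sides up to
swapping, so this minimum cut isolates a vertex only if `S` or its complement is a single
vertex, which happens only when `G` is complete.
-/

open Finset

namespace SimpleGraph

section Cut

variable (G : SimpleGraph V)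

def edgeCut (X : Set V) : Set (Sym2 V) :=
  {e | ∃ a ∈ X, ∃ b ∈ Xᶜ, G.Adj a b ∧ e = s(a, b)}

variable {G}

lemma mk_mem_edgeCut {X : Set V} {a b : V} :
    s(a, b) ∈ G.edgeCut X ↔ G.Adj a b ∧ (a ∈ X ↔ b ∉ X) := by
  constructor
  · rintro ⟨x, hx, y, hy, hxy, he⟩
    rcases Sym2.eq_iff.1 he with ⟨rfl, rfl⟩ | ⟨rfl, rfl⟩
    · exact ⟨hxy, by tauto⟩
    · exact ⟨hxy.symm, by tauto⟩
  · rintro ⟨hab, hX⟩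
    by_cases ha : a ∈ X
    · exact ⟨a, ha, b, hX.1 ha, hab, rfl⟩
    · exact ⟨b, not_not.1 (mt hX.2 ha), a, ha, hab.symm, Sym2.eq_swap⟩

lemma edgeCut_subset_edgeSet (X : Set V) : G.edgeCut X ⊆ G.edgeSet := by
  rintro ⟨a, b⟩ h
  exact (mk_mem_edgeCut.1 h).1

lemma edgeCut_compl (X : Set V) : G.edgeCut Xᶜ = G.edgeCut X := by
  ext ⟨a, b⟩
  simp only [mk_mem_edgeCut, Set.mem_compl_iff]
  tauto

lemma edgeCut_singleton (v : V) : G.edgeCut {v} = G.incidenceSet v := by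
  ext ⟨a, b⟩
  simp only [mk_mem_edgeCut, Set.mem_singleton_iff, mk'_mem_incidenceSet_iff]
  constructor
  · rintro ⟨hab, h⟩
    exact ⟨hab, by tauto⟩
  · rintro ⟨hab, rfl | rfl⟩
    · exact ⟨hab, iff_of_true rfl hab.ne.symm⟩
    · exact ⟨hab, iff_of_false hab.ne (not_not.2 rfl)⟩

lemma Reachable.exists_adj_mem_notMem {S : Set V} {a b : V} (h : G.Reachable a b)
    (ha : a ∈ S) (hb : b ∉ S) : ∃ x ∈ S, ∃ y ∉ S, G.Adj x y := by
  obtain ⟨p⟩ := h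
  obtain ⟨d, -, hd₁, hd₂⟩ := p.exists_boundary_dart S ha hb
  exact ⟨_, hd₁, _, hd₂, d.adj⟩

lemma Connected.eq_or_eq_compl_of_edgeCut_eq (hG : G.Connected) {X Y : Set V}
    (h : G.edgeCut X = G.edgeCut Y) : X = Y ∨ X = Yᶜ := by
  set S := {v | v ∈ X ↔ v ∈ Y}
  -- an edge leaving `S` would lie in exactly one of the two cuts
  have hS : ∀ v w, v ∈ S → w ∈ S := fun v w hv ↦ by
    by_contra hw
    obtain ⟨x, hx, y, hy, hxy⟩ := (hG.preconnected v w).exists_adj_mem_notMem hv hw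
    have := Set.ext_iff.1 h s(x, y)
    simp only [S, Set.mem_ofPred_eq, mk_mem_edgeCut, hxy, true_and] at this hx hy
    tauto
  obtain ⟨v⟩ := hG.nonempty
  by_cases hv : v ∈ S
  · exact .inl (Set.ext fun w ↦ hS v w hv)
  · refine .inr (Set.ext fun w ↦ ?_)
    have := mt (hS w v) hv
    simp only [S, Set.mem_ofPred_eq, Set.mem_compl_iff] at this ⊢
    tauto

lemma not_connected_deleteEdges_edgeCut {X : Set V} (hX : X.Nonempty) (hXc : Xᶜ.Nonempty) :
    ¬ (G.deleteEdges (G.edgeCut X)).Connected := by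
  intro h
  obtain ⟨a, ha⟩ := hX
  obtain ⟨b, hb⟩ := hXc
  obtain ⟨x, hx, y, hy, hxy⟩ := (h.preconnected a b).exists_adj_mem_notMem ha hb
  rw [deleteEdges_adj] at hxy
  exact hxy.2 (mk_mem_edgeCut.2 ⟨hxy.1, iff_of_true hx hy⟩)

lemma Connected.edgeCut_ne_incidenceSet [Fintype V] [DecidableEq V] (hG : G.Connected)
    {S : Finset V} (hS : 2 ≤ #S) (hSc : 2 ≤ #Sᶜ) (v : V) :
    G.edgeCut ↑S ≠ G.incidenceSet v := by
  intro h
  rw [← edgeCut_singleton] at h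
  rcases hG.eq_or_eq_compl_of_edgeCut_eq h with h | h
  · rw [coe_eq_singleton] at h
    rw [h, card_singleton] at hS
    omega
  · rw [← coe_singleton, ← coe_compl, coe_inj] at h
    rw [h, compl_compl, card_singleton] at hSc
    omega

end Cut

section CutSize

variable [Fintype V] [DecidableEq V] (G : SimpleGraph V) [DecidableRel G.Adj]

def cutSize (X : Finset V) : ℕ := #(G.interedges X Xᶜ)

variable {G}

lemma coe_image_interedges_compl (X : Finset V) :
    (↑((G.interedges X Xᶜ).image fun p ↦ s(p.1, p.2)) : Set (Sym2 V)) = G.edgeCut ↑X := by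
  ext e
  simp only [coe_image, Set.mem_image, mem_coe, mem_interedges_iff, mem_compl, edgeCut,
    Set.mem_ofPred_eq, Set.mem_compl_iff, Prod.exists]
  constructor
  · rintro ⟨a, b, ⟨ha, hb, hab⟩, rfl⟩
    exact ⟨a, ha, b, hb, hab, rfl⟩
  · rintro ⟨a, ha, b, hb, hab, rfl⟩
    exact ⟨a, b, ⟨ha, hb, hab⟩, rfl⟩

lemma card_image_interedges_compl (X : Finset V) :
    #((G.interedges X Xᶜ).image fun p ↦ s(p.1, p.2)) = G.cutSize X := by
  refine card_image_of_injOn fun p hp q hq h ↦ ?_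
  simp only [mem_coe, mem_interedges_iff, mem_compl] at hp hq
  rcases Sym2.mk_eq_mk_iff.1 h with h | rfl
  · exact h
  · exact absurd hp.1 hq.2.1

lemma ncard_edgeCut (X : Finset V) : (G.edgeCut ↑X).ncard = G.cutSize X := by
  rw [← coe_image_interedges_compl, Set.ncard_coe_finset, card_image_interedges_compl]

lemma cutSize_compl (X : Finset V) : G.cutSize Xᶜ = G.cutSize X := by
  have : Std.Symm G.Adj := ⟨fun _ _ h ↦ h.symm⟩
  rw [cutSize, cutSize, compl_compl]
  exact Rel.card_interedges_comm _ _

lemma cutSize_eq_sum_indicator (X : Finset V) :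
    G.cutSize X = ∑ p : V × V, if G.Adj p.1 p.2 ∧ p.1 ∈ X ∧ p.2 ∉ X then 1 else 0 := by
  rw [cutSize, interedges_def, card_filter, ← sum_filter, ← sum_filter]
  congr 1
  ext ⟨a, b⟩
  simp only [mem_filter, mem_univ, true_and, mem_product, mem_compl]
  tauto

lemma cutSize_inter_add_cutSize_union_le (X Y : Finset V) :
    G.cutSize (X ∩ Y) + G.cutSize (X ∪ Y) ≤ G.cutSize X + G.cutSize Y := by
  simp only [cutSize_eq_sum_indicator, ← sum_add_distrib]
  refine sum_le_sum fun p _ ↦ ?_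
  simp only [mem_inter, mem_union]
  by_cases h : G.Adj p.1 p.2 <;> by_cases h1 : p.1 ∈ X <;> by_cases h2 : p.1 ∈ Y <;>
    by_cases h3 : p.2 ∈ X <;> by_cases h4 : p.2 ∈ Y <;> simp [h, h1, h2, h3, h4]

lemma cutSize_sdiff_add_cutSize_sdiff_le (X Y : Finset V) :
    G.cutSize (X \ Y) + G.cutSize (Y \ X) ≤ G.cutSize X + G.cutSize Y := by
  have h : X ∪ Yᶜ = (Y \ X)ᶜ := by
    ext
    simp only [mem_union, mem_compl, mem_sdiff]
    tauto
  have := G.cutSize_inter_add_cutSize_union_le X Yᶜ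
  rwa [← sdiff_eq_inter_compl, h, cutSize_compl, cutSize_compl] at this

lemma cutSize_eq_sum_card_sdiff (X : Finset V) :
    G.cutSize X = ∑ x ∈ X, #(G.neighborFinset x \ X) := by
  rw [cutSize, interedges_def, card_filter, sum_product]
  refine sum_congr rfl fun x _ ↦ ?_
  rw [← card_filter]
  congr 1
  ext y
  simp [and_comm]

end CutSize

section EdgeConnectivity

variable [Fintype V] [DecidableEq V] {G : SimpleGraph V} [DecidableRel G.Adj]

lemma edgeConnectivity_le_cutSize {X : Finset V} (hX : X.Nonempty) (hXc : Xᶜ.Nonempty) :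
    edgeConnectivity G ≤ G.cutSize X := by
  rw [← card_image_interedges_compl]
  refine Nat.sInf_le ⟨_, ?_, rfl, ?_⟩ <;> rw [coe_image_interedges_compl]
  · exact edgeCut_subset_edgeSet _
  · exact not_connected_deleteEdges_edgeCut (by simpa) (by rwa [← coe_compl, coe_nonempty])

lemma exists_cutSize_eq_edgeConnectivity [Nontrivial V] :
    ∃ X : Finset V, X.Nonempty ∧ Xᶜ.Nonempty ∧ G.cutSize X = edgeConnectivity G := by
  classical
  have hne : {n | ∃ F : Finset (Sym2 V), ↑F ⊆ G.edgeSet ∧ #F = n ∧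
      ¬ (G.deleteEdges ↑F).Connected}.Nonempty :=
    ⟨_, G.edgeFinset, by simp, rfl, by simpa using not_connected_bot⟩
  obtain ⟨F, -, hF, hdisc⟩ := Nat.sInf_mem hne
  set H := G.deleteEdges ↑F
  obtain ⟨a, b, hab⟩ : ∃ a b, ¬ H.Reachable a b := by
    simpa [connected_iff, Preconnected] using hdisc
  set X := {w | H.Reachable a w}.toFinset
  have hcut : G.edgeCut ↑X ⊆ ↑F := by
    rintro _ ⟨x, hx, y, hy, hxy, rfl⟩
    by_contra hxyF
    simp only [X, Set.coe_toFinset, Set.mem_compl_iff, Set.mem_ofPred_eq] at hx hy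
    exact hy (hx.trans (deleteEdges_adj.2 ⟨hxy, hxyF⟩).reachable)
  have hX : X.Nonempty := ⟨a, by simp [X]⟩
  have hXc : Xᶜ.Nonempty := ⟨b, by simp [X, hab]⟩
  refine ⟨X, hX, hXc, le_antisymm ?_ (edgeConnectivity_le_cutSize hX hXc)⟩
  rw [← card_image_interedges_compl, edgeConnectivity, ← hF]
  exact card_le_card (by rw [← coe_subset, coe_image_interedges_compl]; exact hcut)

lemma Connected.cutSize_pos (hG : G.Connected) {X : Finset V} (hX : X.Nonempty)
    (hXc : Xᶜ.Nonempty) : 0 < G.cutSize X := by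
  obtain ⟨a, ha⟩ := hX
  obtain ⟨b, hb⟩ := hXc
  obtain ⟨x, hx, y, hy, hxy⟩ :=
    (hG.preconnected a b).exists_adj_mem_notMem (S := ↑X) ha (by simpa using hb)
  exact card_pos.2 ⟨(x, y), (mk_mem_interedges_iff G).2 ⟨hx, by simpa using hy, hxy⟩⟩

end EdgeConnectivity

section Regular

variable [Fintype V] {G : SimpleGraph V} [DecidableRel G.Adj] {k : ℕ}

lemma IsRegularOfDegree.add_one_le_card [Nonempty V] (hreg : G.IsRegularOfDegree k) :
    k + 1 ≤ Fintype.card V := by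
  obtain ⟨v⟩ := ‹Nonempty V›
  exact hreg.degree_eq v ▸ G.degree_lt_card_verts v

lemma IsRegularOfDegree.eq_top_of_card_eq (hreg : G.IsRegularOfDegree k)
    (hcard : Fintype.card V = k + 1) : G = ⊤ := by
  classical
  ext x y
  refine ⟨Adj.ne, fun hxy ↦ ?_⟩
  have hN : G.neighborFinset x = univ.erase x := by
    refine eq_of_subset_of_card_le (fun z hz ↦ mem_erase.2 ⟨?_, mem_univ z⟩) ?_
    · exact ((mem_neighborFinset _ _ _).1 hz).ne.symm
    · rw [card_erase_of_mem (mem_univ x), card_univ, card_neighborFinset_eq_degree,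
        hreg.degree_eq]
      omega
  rw [← mem_neighborFinset, hN]
  exact mem_erase.2 ⟨hxy.symm, mem_univ y⟩

lemma Connected.card_le_of_isRegularOfDegree (hG : G.Connected) (hreg : G.IsRegularOfDegree k)
    (hk : k ≤ 1) : Fintype.card V ≤ k + 1 := by
  have hsum := G.sum_degrees_eq_twice_card_edges
  simp only [hreg.degree_eq, sum_const, card_univ, smul_eq_mul] at hsum
  have := hG.card_vert_le_card_edgeSet_add_one
  rw [Nat.card_eq_fintype_card, Nat.card_eq_card_toFinset, ← edgeFinset] at this
  interval_cases k <;> omega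

lemma Connected.two_le_of_isRegularOfDegree (hG : G.Connected) (hreg : G.IsRegularOfDegree k)
    (hne : G ≠ ⊤) : 2 ≤ k := by
  have := hG.nonempty
  by_contra! hk
  exact hne (hreg.eq_top_of_card_eq
    (le_antisymm (hG.card_le_of_isRegularOfDegree hreg (by omega)) hreg.add_one_le_card))

lemma IsRegularOfDegree.add_one_lt_card [Nonempty V] (hreg : G.IsRegularOfDegree k)
    (hne : G ≠ ⊤) : k + 1 < Fintype.card V :=
  hreg.add_one_le_card.lt_of_ne fun h ↦ hne (hreg.eq_top_of_card_eq h.symm)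

lemma IsRegularOfDegree.exists_isClique_card_two [Nonempty V] (hreg : G.IsRegularOfDegree k)
    (hk : 0 < k) : ∃ S : Finset V, #S = 2 ∧ G.IsClique ↑S := by
  classical
  obtain ⟨v⟩ := ‹Nonempty V›
  obtain ⟨w, hvw⟩ := (G.degree_pos_iff_exists_adj v).1 (hreg.degree_eq v ▸ hk)
  exact ⟨{v, w}, card_pair hvw.ne, by simpa [isClique_pair] using fun _ ↦ hvw⟩

end Regular

section Degree

variable [Fintype V] [DecidableEq V] {G : SimpleGraph V} [DecidableRel G.Adj] {S : Finset V}
  {k : ℕ}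

lemma neighborFinset_inter_subset_erase (x : V) : G.neighborFinset x ∩ S ⊆ S.erase x :=
  fun y hy ↦ by
    rw [mem_inter, mem_neighborFinset] at hy
    exact mem_erase.2 ⟨hy.1.ne.symm, hy.2⟩

lemma degree_add_one_le_card_sdiff_add_card {x : V} (hx : x ∈ S) :
    G.degree x + 1 ≤ #(G.neighborFinset x \ S) + #S := by
  have := card_le_card (neighborFinset_inter_subset_erase (G := G) (S := S) x)
  have := card_sdiff_add_card_inter (G.neighborFinset x) S
  have := card_erase_add_one hx
  rw [← card_neighborFinset_eq_degree]
  omega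

lemma isClique_iff_forall_card_sdiff_add_card :
    G.IsClique ↑S ↔ ∀ x ∈ S, #(G.neighborFinset x \ S) + #S = G.degree x + 1 := by
  have key : ∀ x ∈ S, (G.neighborFinset x ∩ S = S.erase x ↔
      #(G.neighborFinset x \ S) + #S = G.degree x + 1) := fun x hx ↦ by
    have hsub := neighborFinset_inter_subset_erase (G := G) (S := S) x
    have := card_le_card hsub
    have hdeg := card_sdiff_add_card_inter (G.neighborFinset x) S
    have := card_erase_add_one hx
    rw [← card_neighborFinset_eq_degree]
    constructor
    · intro h
      rw [h] at hdeg
      omega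
    · intro h
      exact eq_of_subset_of_card_le hsub (by omega)
  refine ⟨fun hS x hx ↦ (key x hx).1 ?_, fun h x hx y hy hxy ↦ ?_⟩
  · refine subset_antisymm (neighborFinset_inter_subset_erase x) fun y hy ↦ ?_
    rw [mem_erase] at hy
    exact mem_inter.2 ⟨(mem_neighborFinset _ _ _).2 (hS hx hy.2 hy.1.symm), hy.2⟩
  · have : y ∈ G.neighborFinset x ∩ S := by
      rw [(key x hx).2 (h x hx)]
      exact mem_erase.2 ⟨hxy.symm, hy⟩
    exact (mem_neighborFinset _ _ _).1 (mem_inter.1 this).1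

lemma IsRegularOfDegree.card_mul_le_cutSize (hreg : G.IsRegularOfDegree k) (S : Finset V) :
    #S * (k + 1 - #S) ≤ G.cutSize S := by
  rw [cutSize_eq_sum_card_sdiff, ← smul_eq_mul, ← sum_const]
  refine sum_le_sum fun x hx ↦ ?_
  have := degree_add_one_le_card_sdiff_add_card (G := G) hx
  rw [hreg.degree_eq] at this
  omega

lemma IsClique.cutSize_eq (hS : G.IsClique ↑S) (hreg : G.IsRegularOfDegree k) :
    G.cutSize S = #S * (k + 1 - #S) := by
  rw [cutSize_eq_sum_card_sdiff, ← smul_eq_mul, ← sum_const]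
  refine sum_congr rfl fun x hx ↦ ?_
  have := isClique_iff_forall_card_sdiff_add_card.1 hS x hx
  rw [hreg.degree_eq] at this
  omega

lemma IsRegularOfDegree.cutSize_singleton (hreg : G.IsRegularOfDegree k) (v : V) :
    G.cutSize {v} = k := by
  rw [IsClique.cutSize_eq (by simp) hreg, card_singleton, Nat.add_sub_cancel, one_mul]

end Degree

section Iso

variable {W : Type*} [Fintype V] [DecidableEq V] [Fintype W] [DecidableEq W]
  {G : SimpleGraph V} [DecidableRel G.Adj] {H : SimpleGraph W} [DecidableRel H.Adj]

lemma Iso.card_neighborFinset_sdiff_image (φ : G ≃g H) (X : Finset V) (x : V) :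
    #(H.neighborFinset (φ x) \ X.image φ) = #(G.neighborFinset x \ X) := by
  have hN : H.neighborFinset (φ x) = (G.neighborFinset x).image φ := by
    ext y
    obtain ⟨y, rfl⟩ := φ.surjective y
    simp [φ.injective.eq_iff, φ.map_adj_iff]
  rw [hN, ← image_sdiff _ _ φ.injective, card_image_of_injective _ φ.injective]

lemma Iso.cutSize_image (φ : G ≃g H) (X : Finset V) : H.cutSize (X.image φ) = G.cutSize X := by
  rw [cutSize_eq_sum_card_sdiff, cutSize_eq_sum_card_sdiff,
    sum_image fun x _ y _ h ↦ φ.injective h]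
  exact sum_congr rfl fun x _ ↦ φ.card_neighborFinset_sdiff_image X x

end Iso

section Block

variable [Fintype V] [DecidableEq V] {G : SimpleGraph V} [DecidableRel G.Adj] {B : Finset V}

lemma card_neighborFinset_sdiff_eq_of_block (hvt : VertexTransitive G)
    (hB : ∀ φ : G ≃g G, B.image φ = B ∨ Disjoint B (B.image φ)) {x y : V} (hx : x ∈ B)
    (hy : y ∈ B) : #(G.neighborFinset x \ B) = #(G.neighborFinset y \ B) := by
  obtain ⟨φ, rfl⟩ := hvt x y
  have hφB : B.image φ = B :=
    (hB φ).resolve_right fun h ↦ Finset.disjoint_left.1 h hy (mem_image_of_mem φ hx)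
  rw [← φ.card_neighborFinset_sdiff_image B x, hφB]

lemma cutSize_eq_card_mul_of_block (hvt : VertexTransitive G)
    (hB : ∀ φ : G ≃g G, B.image φ = B ∨ Disjoint B (B.image φ)) {x : V} (hx : x ∈ B) :
    G.cutSize B = #B * #(G.neighborFinset x \ B) := by
  rw [cutSize_eq_sum_card_sdiff, sum_congr rfl fun y hy ↦
    card_neighborFinset_sdiff_eq_of_block hvt hB hy hx, sum_const, smul_eq_mul]

end Block

section MinCutSide

variable [Fintype V] [DecidableEq V] (G : SimpleGraph V) [DecidableRel G.Adj]

/-- With `m = 2`: a side of a minimum edge cut that does not isolate a vertex. -/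
def IsMinCutSide (m : ℕ) (X : Finset V) : Prop :=
  G.cutSize X = edgeConnectivity G ∧ m ≤ #X ∧ m ≤ #Xᶜ

variable {G} {m : ℕ} {X Y B : Finset V}

lemma IsMinCutSide.compl (h : G.IsMinCutSide m X) : G.IsMinCutSide m Xᶜ :=
  ⟨by rw [cutSize_compl]; exact h.1, h.2.2, by rw [compl_compl]; exact h.2.1⟩

lemma exists_minimal_isMinCutSide (h : G.IsMinCutSide m X) :
    ∃ B, G.IsMinCutSide m B ∧ ∀ Y, G.IsMinCutSide m Y → #B ≤ #Y := by
  classical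
  obtain ⟨B, hB, hmin⟩ :=
    (univ.filter (G.IsMinCutSide m)).exists_min_image card ⟨X, by simpa⟩
  exact ⟨B, (mem_filter.1 hB).2, fun Y hY ↦ hmin Y (by simpa)⟩

lemma cutSize_inter_eq_and_cutSize_sdiff_eq (hX : G.cutSize X = edgeConnectivity G)
    (hY : G.cutSize Y = edgeConnectivity G) (hcard : #X + #Y ≤ Fintype.card V)
    (hXY : (X ∩ Y).Nonempty) (hXdY : (X \ Y).Nonempty) (hYdX : (Y \ X).Nonempty) :
    G.cutSize (X ∩ Y) = edgeConnectivity G ∧ G.cutSize (X \ Y) = edgeConnectivity G := by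
  have hunion : (X ∪ Y)ᶜ.Nonempty := by
    have := card_union_add_card_inter X Y
    have := hXY.card_pos
    exact card_pos.1 (by rw [card_compl]; omega)
  have h₁ := edgeConnectivity_le_cutSize (G := G) hXY
    (hYdX.mono (subset_compl_iff_disjoint_left.2 (disjoint_sdiff.mono_left inter_subset_left)))
  have h₂ := edgeConnectivity_le_cutSize (G := G)
    (hXY.mono (inter_subset_left.trans subset_union_left)) hunion
  have h₃ := edgeConnectivity_le_cutSize (G := G) hXdY
    (hXY.mono (subset_compl_iff_disjoint_left.2 (sdiff_disjoint.mono_right inter_subset_right)))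
  have h₄ := edgeConnectivity_le_cutSize (G := G) hYdX
    (hXY.mono (subset_compl_iff_disjoint_left.2 (sdiff_disjoint.mono_right inter_subset_left)))
  have := G.cutSize_inter_add_cutSize_union_le X Y
  have := G.cutSize_sdiff_add_cutSize_sdiff_le X Y
  omega

lemma IsMinCutSide.image_eq_or_disjoint (hB : G.IsMinCutSide m B)
    (hmin : ∀ Y, G.IsMinCutSide m Y → #B ≤ #Y) (hBm : 2 * m ≤ #B + 1) (φ : G ≃g G) :
    B.image φ = B ∨ Disjoint B (B.image φ) := by
  set Y := B.image φ
  have hYB : #Y = #B := card_image_of_injective _ φ.injective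
  rw [or_iff_not_imp_right, not_disjoint_iff_nonempty_inter]
  intro hBY
  by_contra hne
  have hBY' : (B \ Y).Nonempty :=
    sdiff_nonempty.2 fun h ↦ hne (eq_of_subset_of_card_le h hYB.le).symm
  have hYB' : (Y \ B).Nonempty := sdiff_nonempty.2 fun h ↦ hne (eq_of_subset_of_card_le h hYB.ge)
  have hhalf : #B + #Y ≤ Fintype.card V := by
    have := hmin _ hB.compl
    rw [card_compl] at this
    omega
  obtain ⟨h₁, h₂⟩ := cutSize_inter_eq_and_cutSize_sdiff_eq hB.1
    (by rw [φ.cutSize_image]; exact hB.1) hhalf hBY hBY' hYB'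
  -- by minimality, the two min-cut sides into which `Y` splits `B` are smaller than `m`
  have hsmall : ∀ Z ⊆ B, #Z < #B → G.cutSize Z = edgeConnectivity G → #Z < m := by
    intro Z hZB hZ hcut
    by_contra! hmZ
    have := hmin Z ⟨hcut, hmZ, hB.2.2.trans (card_le_card (compl_subset_compl.2 hZB))⟩
    omega
  have hsplit := card_sdiff_add_card_inter B Y
  have := hsmall _ inter_subset_left (by have := hBY'.card_pos; omega) h₁
  have := hsmall _ sdiff_subset (by have := hBY.card_pos; omega) h₂
  omega

end MinCutSide

section VertexTransitive

variable [Fintype V] [DecidableEq V] {G : SimpleGraph V} [DecidableRel G.Adj] {k : ℕ}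

theorem edgeConnectivity_eq_of_vertexTransitive [Nontrivial V] (hreg : G.IsRegularOfDegree k)
    (hG : G.Connected) (hvt : VertexTransitive G) : edgeConnectivity G = k := by
  obtain ⟨v, w, hvw⟩ := exists_pair_ne V
  have hle : edgeConnectivity G ≤ k := by
    rw [← hreg.cutSize_singleton v]
    exact edgeConnectivity_le_cutSize (singleton_nonempty v) ⟨w, by simpa using hvw.symm⟩
  obtain ⟨X, hX, hXc, hXcut⟩ := exists_cutSize_eq_edgeConnectivity (G := G)
  obtain ⟨B, hB, hmin⟩ :=
    exists_minimal_isMinCutSide (m := 1) ⟨hXcut, hX.card_pos, hXc.card_pos⟩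
  have hB1 : 1 ≤ #B := hB.2.1
  obtain ⟨u, hu⟩ := card_pos.1 hB1
  have hcut := cutSize_eq_card_mul_of_block hvt (hB.image_eq_or_disjoint hmin (by omega)) hu
  have hpos := hG.cutSize_pos ⟨u, hu⟩ (card_pos.1 hB.2.2)
  have hdeg := degree_add_one_le_card_sdiff_add_card (G := G) hu
  rw [hreg.degree_eq] at hdeg
  rw [hB.1] at hcut hpos
  set t := #(G.neighborFinset u \ B)
  have ht1 : 1 ≤ t := Nat.pos_of_ne_zero fun h ↦ by
    rw [h, mul_zero] at hcut
    omega
  -- `(#B - 1) * (t - 1) ≥ 0` turns `t + #B ≥ k + 1` into `#B * t ≥ k`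
  nlinarith

theorem exists_isClique_of_isMinCutSide_two (hreg : G.IsRegularOfDegree k) (hG : G.Connected)
    (hvt : VertexTransitive G) (hk : 3 ≤ k) {X : Finset V} (hX : G.IsMinCutSide 2 X) :
    ∃ S : Finset V, #S = k ∧ G.IsClique ↑S := by
  have : Nontrivial V := Fintype.one_lt_card_iff_nontrivial.1 (hX.2.1.trans (card_le_univ X))
  have hec := edgeConnectivity_eq_of_vertexTransitive hreg hG hvt
  obtain ⟨B, hB, hmin⟩ := exists_minimal_isMinCutSide hX
  -- a two-vertex side already sends out at least `2 (k - 1) > k` edges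
  have hB3 : 3 ≤ #B := by
    by_contra! h
    have := hreg.card_mul_le_cutSize B
    rw [hB.1, hec, show #B = 2 by linarith [hB.2.1]] at this
    omega
  have hblock := hB.image_eq_or_disjoint hmin (by omega)
  obtain ⟨u, hu⟩ := card_pos.1 (by omega : 0 < #B)
  have hcut := cutSize_eq_card_mul_of_block hvt hblock hu
  have hdeg := degree_add_one_le_card_sdiff_add_card (G := G) hu
  rw [hreg.degree_eq] at hdeg
  rw [hB.1, hec] at hcut
  have ht : #(G.neighborFinset u \ B) = 1 := by nlinarith
  rw [ht, mul_one] at hcut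
  refine ⟨B, hcut.symm, isClique_iff_forall_card_sdiff_add_card.2 fun x hx ↦ ?_⟩
  rw [card_neighborFinset_sdiff_eq_of_block hvt hblock hx hu, ht, hreg.degree_eq, hcut, add_comm]

end VertexTransitive

section Superconnected

variable [Fintype V] [DecidableEq V] {G : SimpleGraph V} [DecidableRel G.Adj] {k : ℕ}

theorem IsClique.exists_isEdgeCut_ne_incidenceSet (hreg : G.IsRegularOfDegree k)
    (hG : G.Connected) (hvt : VertexTransitive G) (hne : G ≠ ⊤) {S : Finset V}
    (hS : G.IsClique ↑S) (hSk : #S = k) :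
    ∃ F, IsEdgeCut G F ∧ F.ncard = edgeConnectivity G ∧ ∀ v, F ≠ G.incidenceSet v := by
  have := hG.nonempty
  have hk := hG.two_le_of_isRegularOfDegree hreg hne
  have hcard := hreg.add_one_lt_card hne
  have : Nontrivial V := Fintype.one_lt_card_iff_nontrivial.1 (by omega)
  have hSc : 2 ≤ #Sᶜ := by rw [card_compl]; omega
  have hec := edgeConnectivity_eq_of_vertexTransitive hreg hG hvt
  have hS2 : 2 ≤ #S := hSk ▸ hk
  refine ⟨G.edgeCut ↑S, ⟨↑S, ?_, ?_, rfl⟩, ?_, hG.edgeCut_ne_incidenceSet hS2 hSc⟩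
  · exact coe_nonempty.2 (card_pos.1 (by omega))
  · rw [← coe_compl, coe_nonempty]
    exact card_pos.1 (by omega)
  · rw [ncard_edgeCut, hS.cutSize_eq hreg, hSk, hec, Nat.add_sub_cancel_left, mul_one]

theorem exists_eq_incidenceSet_of_isEdgeCut (hreg : G.IsRegularOfDegree k) (hG : G.Connected)
    (hvt : VertexTransitive G) (hk : 3 ≤ k)
    (hno : ¬ ∃ S : Finset V, #S = k ∧ G.IsClique ↑S)
    {F : Set (Sym2 V)} (hF : IsEdgeCut G F) (hFc : F.ncard = edgeConnectivity G) :
    ∃ v, F = G.incidenceSet v := by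
  obtain ⟨X, hX, hXc, hF⟩ := hF
  change F = G.edgeCut X at hF
  subst hF
  lift X to Finset V using X.toFinite
  rw [ncard_edgeCut] at hFc
  rw [← coe_compl, coe_nonempty] at hXc
  rw [coe_nonempty] at hX
  by_cases h₁ : #X ≤ 1
  · obtain ⟨v, rfl⟩ := card_eq_one.1 (le_antisymm h₁ hX.card_pos)
    exact ⟨v, by rw [coe_singleton, edgeCut_singleton]⟩
  by_cases h₂ : #Xᶜ ≤ 1
  · obtain ⟨w, hw⟩ := card_eq_one.1 (le_antisymm h₂ hXc.card_pos)
    exact ⟨w, by rw [← edgeCut_compl, ← coe_compl, hw, coe_singleton, edgeCut_singleton]⟩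
  exact absurd (exists_isClique_of_isMinCutSide_two hreg hG hvt hk ⟨hFc, by omega, by omega⟩)
    hno

end Superconnected

end SimpleGraph

lemma GIsRegular.isRegularOfDegree [Fintype V] {G : SimpleGraph V} [DecidableRel G.Adj] {k : ℕ}
    (h : GIsRegular G k) : G.IsRegularOfDegree k := fun v ↦ by
  rw [← card_neighborSet_eq_degree, ← Nat.card_eq_fintype_card, Nat.card_coe_set_eq, h v]

theorem stmt18_general [Fintype V] (G : SimpleGraph V) (k : ℕ)
    (hreg : GIsRegular G k) (hconn : G.Connected)
    (hvt : VertexTransitive G)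
    (hnotcomplete : G ≠ ⊤) :
    (∀ F : Set (Sym2 V), IsEdgeCut G F → F.ncard = edgeConnectivity G →
      ∃ v : V, F = G.incidenceSet v) ↔
    ¬ ∃ S : Finset V, S.card = k ∧ G.IsClique ↑S := by
  classical
  replace hreg := hreg.isRegularOfDegree
  have : Nonempty V := hconn.nonempty
  constructor
  · rintro htriv ⟨S, hSk, hS⟩
    obtain ⟨F, hF, hFc, hFv⟩ :=
      hS.exists_isEdgeCut_ne_incidenceSet hreg hconn hvt hnotcomplete hSk
    obtain ⟨v, hv⟩ := htriv F hF hFc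
    exact hFv v hv
  · intro hno
    rcases (hconn.two_le_of_isRegularOfDegree hreg hnotcomplete).eq_or_lt with rfl | hk
    · exact absurd (hreg.exists_isClique_card_two two_pos) hno
    · exact fun F hF hFc ↦ exists_eq_incidenceSet_of_isEdgeCut hreg hconn hvt hk hno hF hFc

theorem stmt18 [Fintype V] (G : SimpleGraph V) (k : ℕ)
    (hreg : GIsRegular G k) (hconn : G.Connected)
    (hvt : VertexTransitive G)
    (hnotcomplete : G ≠ ⊤)
    (hnotcycle : ∀ n : ℕ, IsEmpty (G ≃g cycleGraph n)) :
    (∀ F : Set (Sym2 V), IsEdgeCut G F → F.ncard = edgeConnectivity G →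
      ∃ v : V, F = G.incidenceSet v) ↔
    ¬ ∃ S : Finset V, S.card = k ∧ G.IsClique ↑S :=
  stmt18_general G k hreg hconn hvt hnotcomplete
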